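/- Let K = WithTop (ℕ ×ₗ ℕ) and L₂ = K × Bool with the componentwise lattice order. The set Γ of non-generators of L₂ is exactly { ((n,0), false) : n ∈ ℕ } ∪ { ((n,0), true) : n ∈ ℕ, n ≥ 1 } ∪ { (⊤, true) }. -/

import Mathlib

/-- A complete sublattice of a complete lattice: a subset closed under arbitrary
infima and suprema computed in `L` (including the empty ones, so it contains `⊤` and `⊥`). -/
def IsCompleteSublattice {L : Type*} [CompleteLattice L] (S : Set L) : Prop :=
  (∀ Y : Set L, Y ⊆ S → sInf Y ∈ S) ∧ (∀ Y : Set L, Y ⊆ S → sSup Y ∈ S)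

/-- The complete sublattice generated by `X`: the intersection of all complete
sublattices containing `X`. -/
def latGen {L : Type*} [CompleteLattice L] (X : Set L) : Set L :=
  ⋂₀ {S : Set L | IsCompleteSublattice S ∧ X ⊆ S}

/-- `a` is a non-generator (w.r.t. complete-sublattice generation). -/
def IsLatNonGenerator {L : Type*} [CompleteLattice L] (a : L) : Prop :=
  ∀ X : Set L, latGen (X ∪ {a}) = Set.univ → latGen X = Set.univ

/-- A maximal proper complete sublattice. -/
def IsMaxProperSublattice {L : Type*} [CompleteLattice L] (P : Set L) : Prop :=
  IsCompleteSublattice P ∧ P ≠ Set.univ ∧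
    ∀ Q : Set L, IsCompleteSublattice Q → Q ≠ Set.univ → P ⊆ Q → P = Q

/-- `ℕ ×ₗ ℕ` is a well-order, hence conditionally complete with bottom;
this makes `WithTop (ℕ ×ₗ ℕ)` a complete lattice of order type `ω² + 1`. -/
noncomputable instance : ConditionallyCompleteLinearOrderBot (ℕ ×ₗ ℕ) :=
  WellFoundedLT.conditionallyCompleteLinearOrderBot _

/-! ### latGen basics -/

section latGenBasics
variable {L : Type*} [CompleteLattice L]

lemma subset_latGen (X : Set L) : X ⊆ latGen X := fun x hx S hS => hS.2 hx

lemma latGen_subset {X S : Set L} (hS : IsCompleteSublattice S) (hXS : X ⊆ S) :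
    latGen X ⊆ S := fun _ hx => hx S ⟨hS, hXS⟩

lemma isCS_latGen (X : Set L) : IsCompleteSublattice (latGen X) := by
  constructor
  · intro Y hY S hS
    exact hS.1.1 Y (hY.trans (latGen_subset hS.1 hS.2))
  · intro Y hY S hS
    exact hS.1.2 Y (hY.trans (latGen_subset hS.1 hS.2))

lemma not_nonGen {a : L} {S : Set L} (hS : IsCompleteSublattice S) (haS : a ∉ S)
    (hgen : latGen (S ∪ {a}) = Set.univ) : ¬ IsLatNonGenerator a := by
  intro h
  have := h S hgen
  have : a ∈ latGen S := this ▸ Set.mem_univ a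
  exact haS (latGen_subset hS (subset_refl S) this)

end latGenBasics

/-! ### the chain K2 -/

abbrev K2 := WithTop (ℕ ×ₗ ℕ)

def cc (n m : ℕ) : K2 := ((toLex (n, m) : ℕ ×ₗ ℕ) : K2)

lemma cc_le_cc {n m n' m' : ℕ} : cc n m ≤ cc n' m' ↔ (n < n' ∨ (n = n' ∧ m ≤ m')) :=
  WithTop.coe_le_coe.trans Prod.Lex.le_iff

lemma cc_lt_cc {n m n' m' : ℕ} : cc n m < cc n' m' ↔ (n < n' ∨ (n = n' ∧ m < m')) :=
  WithTop.coe_lt_coe.trans Prod.Lex.lt_iff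

lemma cc_le_coe {n m : ℕ} {q : ℕ ×ₗ ℕ} :
    cc n m ≤ (q : K2) ↔ (n < (ofLex q).1 ∨ (n = (ofLex q).1 ∧ m ≤ (ofLex q).2)) :=
  WithTop.coe_le_coe.trans (Prod.Lex.le_iff (x := toLex (n, m)) (y := q))

lemma coe_le_cc {n m : ℕ} {q : ℕ ×ₗ ℕ} :
    (q : K2) ≤ cc n m ↔ ((ofLex q).1 < n ∨ ((ofLex q).1 = n ∧ (ofLex q).2 ≤ m)) :=
  WithTop.coe_le_coe.trans (Prod.Lex.le_iff (x := q) (y := toLex (n, m)))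

lemma coe_lt_cc {n m : ℕ} {q : ℕ ×ₗ ℕ} :
    (q : K2) < cc n m ↔ ((ofLex q).1 < n ∨ ((ofLex q).1 = n ∧ (ofLex q).2 < m)) :=
  WithTop.coe_lt_coe.trans (Prod.Lex.lt_iff (x := q) (y := toLex (n, m)))

lemma cc_lt_coe {n m : ℕ} {q : ℕ ×ₗ ℕ} :
    cc n m < (q : K2) ↔ (n < (ofLex q).1 ∨ (n = (ofLex q).1 ∧ m < (ofLex q).2)) :=
  WithTop.coe_lt_coe.trans (Prod.Lex.lt_iff (x := toLex (n, m)) (y := q))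

lemma cc_bot_le (k : K2) : cc 0 0 ≤ k := by
  induction k using WithTop.recTopCoe with
  | top => exact le_top
  | coe q => exact cc_le_coe.2 (by omega)

lemma K2_bot : (⊥ : K2) = cc 0 0 := le_antisymm bot_le (cc_bot_le ⊥)

/-- below a successor -/
lemma le_of_lt_cc_succ {k : K2} {n m : ℕ} (h : k < cc n (m+1)) : k ≤ cc n m := by
  induction k using WithTop.recTopCoe with
  | top => exact absurd h (by simp)
  | coe q =>
    have := coe_lt_cc.1 h
    exact coe_le_cc.2 (by omega)

/-- above anything -/
lemma cc_succ_le_of_lt {k : K2} {n m : ℕ} (h : cc n m < k) : cc n (m+1) ≤ k := by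
  induction k using WithTop.recTopCoe with
  | top => exact le_top
  | coe q =>
    have := cc_lt_coe.1 h
    exact cc_le_coe.2 (by omega)

lemma sSup_eq_cc_succ_mem {Z : Set K2} {n m : ℕ} (h : sSup Z = cc n (m+1)) :
    cc n (m+1) ∈ Z := by
  by_contra hc
  have hb : ∀ z ∈ Z, z ≤ cc n m := by
    intro z hz
    have hlt : z < cc n (m+1) := lt_of_le_of_ne (h ▸ le_sSup hz) (fun he => hc (he ▸ hz))
    exact le_of_lt_cc_succ hlt
  have : sSup Z ≤ cc n m := sSup_le hb
  rw [h] at this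
  exact absurd (cc_le_cc.1 this) (by omega)

lemma sInf_eq_cc_mem {Z : Set K2} {n m : ℕ} (h : sInf Z = cc n m) : cc n m ∈ Z := by
  by_contra hc
  have hb : ∀ z ∈ Z, cc n (m+1) ≤ z := by
    intro z hz
    have hlt : cc n m < z := lt_of_le_of_ne (h ▸ sInf_le hz) (fun he => hc (he ▸ hz))
    exact cc_succ_le_of_lt hlt
  have : cc n (m+1) ≤ sInf Z := le_sInf hb
  rw [h] at this
  exact absurd (cc_le_cc.1 this) (by omega)

lemma sSup_Iio_cc {n : ℕ} : sSup (Set.Iio (cc n 0)) = cc n 0 := by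
  have hle : sSup (Set.Iio (cc n 0)) ≤ cc n 0 := sSup_le (fun z hz => le_of_lt hz)
  rcases eq_or_lt_of_le hle with he | hlt
  · exact he
  · exfalso
    rcases hq : sSup (Set.Iio (cc n 0)) with _ | q
    · rw [hq] at hlt; exact not_top_lt hlt
    · rw [hq] at hlt
      have h1 := coe_lt_cc.1 hlt
      have h2 : ((toLex ((ofLex q).1, (ofLex q).2 + 1) : ℕ ×ₗ ℕ) : K2) < cc n 0 :=
        coe_lt_cc.2 (by simp; omega)
      have h3 : ((toLex ((ofLex q).1, (ofLex q).2 + 1) : ℕ ×ₗ ℕ) : K2) ≤ sSup (Set.Iio (cc n 0)) :=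
        le_sSup h2
      rw [hq] at h3
      have h4 := (Prod.Lex.le_iff (x := toLex ((ofLex q).1, (ofLex q).2 + 1)) (y := q)).1 (WithTop.coe_le_coe.1 h3)
      simp only [ofLex_toLex] at h4
      omega

/-! ### Bool facts -/

lemma bool_sSup_true {Z : Set Bool} (h : sSup Z = true) : true ∈ Z := by
  by_contra hc
  have hsub : Z ⊆ {false} := by intro b hb; rcases b with _ | _ <;> simp_all
  have : sSup Z ≤ sSup {false} := sSup_le_sSup hsub
  rw [h, sSup_singleton] at this
  exact absurd this (by decide)

lemma bool_sInf_false {Z : Set Bool} (h : sInf Z = false) : false ∈ Z := by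
  by_contra hc
  have hsub : Z ⊆ {true} := by intro b hb; rcases b with _ | _ <;> simp_all
  have : sInf {true} ≤ sInf Z := sInf_le_sInf hsub
  rw [h, sInf_singleton] at this
  exact absurd this (by decide)

lemma bool_eq_false_of_sSup {Z : Set Bool} (h : sSup Z = false) {b : Bool} (hb : b ∈ Z) :
    b = false := by
  have : b ≤ false := h ▸ le_sSup hb
  exact le_bot_iff.1 this

lemma bool_eq_true_of_sInf {Z : Set Bool} (h : sInf Z = true) {b : Bool} (hb : b ∈ Z) :
    b = true := by
  have : true ≤ b := h ▸ sInf_le hb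
  exact top_le_iff.1 this

/-! ### nonempty-closed subsets of K2 -/

def NEClosed (P : Set K2) : Prop :=
  (∀ Z : Set K2, Z ⊆ P → Z.Nonempty → sSup Z ∈ P) ∧
  (∀ Z : Set K2, Z ⊆ P → Z.Nonempty → sInf Z ∈ P)

lemma NEClosed.union {P Q : Set K2} (hP : NEClosed P) (hQ : NEClosed Q) :
    NEClosed (P ∪ Q) := by
  constructor
  · intro Z hZ hne
    have hsplit : Z = (Z ∩ P) ∪ (Z ∩ Q) := by
      rw [← Set.inter_union_distrib_left]; exact (Set.inter_eq_left.2 hZ).symm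
    rcases (Z ∩ P).eq_empty_or_nonempty with hPe | hPn
    · have : Z ⊆ Q := by rw [hsplit, hPe]; simp [Set.inter_subset_right]
      exact Or.inr (hQ.1 Z this hne)
    rcases (Z ∩ Q).eq_empty_or_nonempty with hQe | hQn
    · have : Z ⊆ P := by rw [hsplit, hQe]; simp [Set.inter_subset_left]
      exact Or.inl (hP.1 Z this hne)
    have hs : sSup Z = sSup (Z ∩ P) ⊔ sSup (Z ∩ Q) := by
      conv_lhs => rw [hsplit]
      exact sSup_union
    have h1 : sSup (Z ∩ P) ∈ P := hP.1 _ Set.inter_subset_right hPn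
    have h2 : sSup (Z ∩ Q) ∈ Q := hQ.1 _ Set.inter_subset_right hQn
    rcases le_total (sSup (Z ∩ P)) (sSup (Z ∩ Q)) with hle | hle
    · rw [hs, sup_eq_right.2 hle]; exact Or.inr h2
    · rw [hs, sup_eq_left.2 hle]; exact Or.inl h1
  · intro Z hZ hne
    have hsplit : Z = (Z ∩ P) ∪ (Z ∩ Q) := by
      rw [← Set.inter_union_distrib_left]; exact (Set.inter_eq_left.2 hZ).symm
    rcases (Z ∩ P).eq_empty_or_nonempty with hPe | hPn
    · have : Z ⊆ Q := by rw [hsplit, hPe]; simp [Set.inter_subset_right]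
      exact Or.inr (hQ.2 Z this hne)
    rcases (Z ∩ Q).eq_empty_or_nonempty with hQe | hQn
    · have : Z ⊆ P := by rw [hsplit, hQe]; simp [Set.inter_subset_left]
      exact Or.inl (hP.2 Z this hne)
    have hs : sInf Z = sInf (Z ∩ P) ⊓ sInf (Z ∩ Q) := by
      conv_lhs => rw [hsplit]
      exact sInf_union
    have h1 : sInf (Z ∩ P) ∈ P := hP.2 _ Set.inter_subset_right hPn
    have h2 : sInf (Z ∩ Q) ∈ Q := hQ.2 _ Set.inter_subset_right hQn
    rcases le_total (sInf (Z ∩ P)) (sInf (Z ∩ Q)) with hle | hle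
    · rw [hs, inf_eq_left.2 hle]; exact Or.inl h1
    · rw [hs, inf_eq_right.2 hle]; exact Or.inr h2

lemma NEClosed.singleton (x : K2) : NEClosed {x} := by
  constructor <;>
  · intro Z hZ hne
    have : Z = {x} := (hne.subset_singleton_iff).1 hZ
    simp [this]

lemma NEClosed.inter_Iic {P : Set K2} (hP : NEClosed P) (c : K2) :
    NEClosed (P ∩ Set.Iic c) := by
  constructor
  · intro Z hZ hne
    refine ⟨hP.1 Z (hZ.trans Set.inter_subset_left) hne, ?_⟩
    exact sSup_le (fun z hz => (hZ hz).2)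
  · intro Z hZ hne
    refine ⟨hP.2 Z (hZ.trans Set.inter_subset_left) hne, ?_⟩
    obtain ⟨z, hz⟩ := hne
    exact le_trans (sInf_le hz) (hZ hz).2

lemma NEClosed.inter_Ici {P : Set K2} (hP : NEClosed P) (c : K2) :
    NEClosed (P ∩ Set.Ici c) := by
  constructor
  · intro Z hZ hne
    refine ⟨hP.1 Z (hZ.trans Set.inter_subset_left) hne, ?_⟩
    obtain ⟨z, hz⟩ := hne
    exact le_trans (hZ hz).2 (le_sSup hz)
  · intro Z hZ hne
    refine ⟨hP.2 Z (hZ.trans Set.inter_subset_left) hne, ?_⟩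
    exact le_sInf (fun z hz => (hZ hz).2)

/-! ### two-column sublattices of K2 × Bool -/

def mkLat (A B : Set K2) : Set (K2 × Bool) :=
  {p | (p.2 = false ∧ p.1 ∈ A) ∨ (p.2 = true ∧ p.1 ∈ B)}

lemma mem_mkLat_false {A B : Set K2} {k : K2} : (k, false) ∈ mkLat A B ↔ k ∈ A := by
  simp [mkLat]

lemma mem_mkLat_true {A B : Set K2} {k : K2} : (k, true) ∈ mkLat A B ↔ k ∈ B := by
  simp [mkLat]

lemma mem_mkLat_iff {A B : Set K2} {p : K2 × Bool} :
    p ∈ mkLat A B ↔ (p.2 = false ∧ p.1 ∈ A) ∨ (p.2 = true ∧ p.1 ∈ B) := Iff.rfl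

lemma mkLat_isCS {A B : Set K2} (hA : NEClosed A) (hB : NEClosed B)
    (hbot : (⊥ : K2) ∈ A) (htop : (⊤ : K2) ∈ B)
    (hsup : ∀ a ∈ A, ∀ b ∈ B, a ⊔ b ∈ B) (hinf : ∀ a ∈ A, ∀ b ∈ B, a ⊓ b ∈ A) :
    IsCompleteSublattice (mkLat A B) := by
  constructor
  · -- sInf
    intro Y hY
    have hfst : (sInf Y).1 = sInf (Prod.fst '' Y) := Prod.fst_sInf Y
    have hsnd : (sInf Y).2 = sInf (Prod.snd '' Y) := Prod.snd_sInf Y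
    rcases Bool.eq_false_or_eq_true (sInf Y).2 with h2 | h2
    swap
    · -- some coordinate is false
      rw [hsnd] at h2
      obtain ⟨y₀, hy₀Y, hy₀2⟩ : ∃ y ∈ Y, y.2 = false := by
        obtain ⟨y, hyY, hy2⟩ := bool_sInf_false h2
        exact ⟨y, hyY, hy2⟩
      set Yf := {y ∈ Y | y.2 = false} with hYf
      set Yt := {y ∈ Y | y.2 = true} with hYt
      have hYsplit : Prod.fst '' Y = Prod.fst '' Yf ∪ Prod.fst '' Yt := by
        rw [← Set.image_union]
        have : Y = Yf ∪ Yt := by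
          ext y
          rcases Bool.eq_false_or_eq_true y.2 with h | h <;> simp [hYf, hYt, h]
        rw [← this]
      have hfA : Prod.fst '' Yf ⊆ A := by
        rintro _ ⟨y, hy, rfl⟩
        have := hY hy.1
        rcases mem_mkLat_iff.1 this with ⟨_, h⟩ | ⟨ht, _⟩
        · exact h
        · rw [hy.2] at ht; exact absurd ht (by decide)
      have hfB : Prod.fst '' Yt ⊆ B := by
        rintro _ ⟨y, hy, rfl⟩
        have := hY hy.1
        rcases mem_mkLat_iff.1 this with ⟨hf, _⟩ | ⟨_, h⟩
        · rw [hy.2] at hf; exact absurd hf (by decide)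
        · exact h
      have hα : sInf (Prod.fst '' Yf) ∈ A :=
        hA.2 _ hfA ⟨y₀.1, ⟨y₀, ⟨hy₀Y, hy₀2⟩, rfl⟩⟩
      have hβ : sInf (Prod.fst '' Yt) ∈ B ∨ Prod.fst '' Yt = ∅ := by
        rcases (Prod.fst '' Yt).eq_empty_or_nonempty with he | hne
        · exact Or.inr he
        · exact Or.inl (hB.2 _ hfB hne)
      have hres : sInf (Prod.fst '' Y) ∈ A := by
        rw [hYsplit, sInf_union]
        rcases hβ with hβ | hβ
        · exact hinf _ hα _ hβ
        · rw [hβ, sInf_empty, inf_top_eq]; exact hα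
      have : (sInf Y).1 ∈ A := hfst ▸ hres
      exact mem_mkLat_iff.2 (Or.inl ⟨h2 ▸ hsnd.symm ▸ rfl, this⟩)
    · -- all coordinates true
      rw [hsnd] at h2
      have hfB : Prod.fst '' Y ⊆ B := by
        rintro _ ⟨y, hy, rfl⟩
        have h2y : y.2 = true := bool_eq_true_of_sInf h2 ⟨y, hy, rfl⟩
        rcases mem_mkLat_iff.1 (hY hy) with ⟨hf, _⟩ | ⟨_, h⟩
        · rw [h2y] at hf; exact absurd hf (by decide)
        · exact h
      have hres : sInf (Prod.fst '' Y) ∈ B := by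
        rcases (Prod.fst '' Y).eq_empty_or_nonempty with he | hne
        · rw [he, sInf_empty]; exact htop
        · exact hB.2 _ hfB hne
      exact mem_mkLat_iff.2 (Or.inr ⟨h2 ▸ hsnd.symm ▸ rfl, hfst ▸ hres⟩)
  · -- sSup
    intro Y hY
    have hfst : (sSup Y).1 = sSup (Prod.fst '' Y) := Prod.fst_sSup Y
    have hsnd : (sSup Y).2 = sSup (Prod.snd '' Y) := Prod.snd_sSup Y
    rcases Bool.eq_false_or_eq_true (sSup Y).2 with h2 | h2
    swap
    · -- all coordinates false
      rw [hsnd] at h2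
      have hfA : Prod.fst '' Y ⊆ A := by
        rintro _ ⟨y, hy, rfl⟩
        have h2y : y.2 = false := bool_eq_false_of_sSup h2 ⟨y, hy, rfl⟩
        rcases mem_mkLat_iff.1 (hY hy) with ⟨_, h⟩ | ⟨ht, _⟩
        · exact h
        · rw [h2y] at ht; exact absurd ht (by decide)
      have hres : sSup (Prod.fst '' Y) ∈ A := by
        rcases (Prod.fst '' Y).eq_empty_or_nonempty with he | hne
        · rw [he, sSup_empty]; exact hbot
        · exact hA.1 _ hfA hne
      exact mem_mkLat_iff.2 (Or.inl ⟨h2 ▸ hsnd.symm ▸ rfl, hfst ▸ hres⟩)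
    · -- some coordinate true
      rw [hsnd] at h2
      obtain ⟨y₀, hy₀Y, hy₀2⟩ : ∃ y ∈ Y, y.2 = true := by
        obtain ⟨y, hyY, hy2⟩ := bool_sSup_true h2
        exact ⟨y, hyY, hy2⟩
      set Yf := {y ∈ Y | y.2 = false} with hYf
      set Yt := {y ∈ Y | y.2 = true} with hYt
      have hYsplit : Prod.fst '' Y = Prod.fst '' Yf ∪ Prod.fst '' Yt := by
        rw [← Set.image_union]
        have : Y = Yf ∪ Yt := by
          ext y
          rcases Bool.eq_false_or_eq_true y.2 with h | h <;> simp [hYf, hYt, h]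
        rw [← this]
      have hfA : Prod.fst '' Yf ⊆ A := by
        rintro _ ⟨y, hy, rfl⟩
        rcases mem_mkLat_iff.1 (hY hy.1) with ⟨_, h⟩ | ⟨ht, _⟩
        · exact h
        · rw [hy.2] at ht; exact absurd ht (by decide)
      have hfB : Prod.fst '' Yt ⊆ B := by
        rintro _ ⟨y, hy, rfl⟩
        rcases mem_mkLat_iff.1 (hY hy.1) with ⟨hf, _⟩ | ⟨_, h⟩
        · rw [hy.2] at hf; exact absurd hf (by decide)
        · exact h
      have hβ : sSup (Prod.fst '' Yt) ∈ B :=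
        hB.1 _ hfB ⟨y₀.1, ⟨y₀, ⟨hy₀Y, hy₀2⟩, rfl⟩⟩
      have hα : sSup (Prod.fst '' Yf) ∈ A ∨ Prod.fst '' Yf = ∅ := by
        rcases (Prod.fst '' Yf).eq_empty_or_nonempty with he | hne
        · exact Or.inr he
        · exact Or.inl (hA.1 _ hfA hne)
      have hres : sSup (Prod.fst '' Y) ∈ B := by
        rw [hYsplit, sSup_union]
        rcases hα with hα | hα
        · exact hsup _ hα _ hβ
        · rw [hα, sSup_empty, bot_sup_eq]; exact hβ
      exact mem_mkLat_iff.2 (Or.inr ⟨h2 ▸ hsnd.symm ▸ rfl, hfst ▸ hres⟩)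

/-! ### columns of a complete sublattice -/

def colA (S : Set (K2 × Bool)) : Set K2 := {k | (k, false) ∈ S}
def colB (S : Set (K2 × Bool)) : Set K2 := {k | (k, true) ∈ S}

section columns
variable {S : Set (K2 × Bool)} (hS : IsCompleteSublattice S)
include hS

lemma image_col_sSup {b : Bool} {Z : Set K2} (hne : Z.Nonempty) :
    sSup ((fun k => (k, b)) '' Z) = (sSup Z, b) := by
  have h1 : Prod.fst '' ((fun k => (k, b)) '' Z) = Z := by
    rw [Set.image_image]; simp
  have h2 : Prod.snd '' ((fun k => (k, b)) '' Z) = {b} := by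
    rw [Set.image_image]
    exact Set.Nonempty.image_const hne b
  apply Prod.ext
  · rw [Prod.fst_sSup, h1]
  · rw [Prod.snd_sSup, h2, sSup_singleton]

lemma image_col_sInf {b : Bool} {Z : Set K2} (hne : Z.Nonempty) :
    sInf ((fun k => (k, b)) '' Z) = (sInf Z, b) := by
  have h1 : Prod.fst '' ((fun k => (k, b)) '' Z) = Z := by
    rw [Set.image_image]; simp
  have h2 : Prod.snd '' ((fun k => (k, b)) '' Z) = {b} := by
    rw [Set.image_image]
    exact Set.Nonempty.image_const hne b
  apply Prod.ext
  · rw [Prod.fst_sInf, h1]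
  · rw [Prod.snd_sInf, h2, sInf_singleton]

omit hS in
lemma image_col_sub {b : Bool} {Z : Set K2} {C : Set K2}
    (hZ : Z ⊆ C) (hC : ∀ k ∈ C, (k, b) ∈ S) : (fun k => (k, b)) '' Z ⊆ S := by
  rintro _ ⟨k, hk, rfl⟩; exact hC k (hZ hk)

lemma colA_NEClosed : NEClosed (colA S) := by
  constructor
  · intro Z hZ hne
    have := hS.2 _ (image_col_sub (S := S) hZ (fun k hk => hk))
    rwa [image_col_sSup hS hne] at this
  · intro Z hZ hne
    have := hS.1 _ (image_col_sub (S := S) hZ (fun k hk => hk))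
    rwa [image_col_sInf hS hne] at this

lemma colB_NEClosed : NEClosed (colB S) := by
  constructor
  · intro Z hZ hne
    have := hS.2 _ (image_col_sub (S := S) hZ (fun k hk => hk))
    rwa [image_col_sSup hS hne] at this
  · intro Z hZ hne
    have := hS.1 _ (image_col_sub (S := S) hZ (fun k hk => hk))
    rwa [image_col_sInf hS hne] at this

lemma colA_bot : (⊥ : K2) ∈ colA S := by
  have := hS.2 ∅ (Set.empty_subset S)
  rw [sSup_empty] at this
  exact this

lemma colB_top : (⊤ : K2) ∈ colB S := by
  have := hS.1 ∅ (Set.empty_subset S)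
  rw [sInf_empty] at this
  exact this

lemma col_mix_sup {a b : K2} (ha : a ∈ colA S) (hb : b ∈ colB S) : a ⊔ b ∈ colB S := by
  have hsub : {((a : K2), false), ((b : K2), true)} ⊆ S := by
    intro p hp; rcases hp with hp | hp <;> subst hp
    · exact ha
    · exact hb
  have := hS.2 _ hsub
  rw [sSup_pair] at this
  have he : ((a, false) : K2 × Bool) ⊔ (b, true) = (a ⊔ b, true) := by
    apply Prod.ext <;> simp
  rwa [he] at this

lemma col_mix_inf {a b : K2} (ha : a ∈ colA S) (hb : b ∈ colB S) : a ⊓ b ∈ colA S := by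
  have hsub : {((a : K2), false), ((b : K2), true)} ⊆ S := by
    intro p hp; rcases hp with hp | hp <;> subst hp
    · exact ha
    · exact hb
  have := hS.1 _ hsub
  rw [sInf_pair] at this
  have he : ((a, false) : K2 × Bool) ⊓ (b, true) = (a ⊓ b, false) := by
    apply Prod.ext <;> simp
  rwa [he] at this

omit hS in
lemma sub_mkLat_of_cols {A B : Set K2} (hA : colA S ⊆ A) (hB : colB S ⊆ B) :
    S ⊆ mkLat A B := by
  intro p hp
  rcases Bool.eq_false_or_eq_true p.2 with h | h
  · have : (p.1, true) ∈ S := by rwa [show (p.1, true) = p from Prod.ext rfl h.symm]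
    exact mem_mkLat_iff.2 (Or.inr ⟨h, hB this⟩)
  · have : (p.1, false) ∈ S := by rwa [show (p.1, false) = p from Prod.ext rfl h.symm]
    exact mem_mkLat_iff.2 (Or.inl ⟨h, hA this⟩)

end columns

/-! ### binary operations in a complete sublattice -/

lemma CS_sup_mem {T : Set (K2 × Bool)} (hT : IsCompleteSublattice T)
    {p q : K2 × Bool} (hp : p ∈ T) (hq : q ∈ T) : p ⊔ q ∈ T := by
  have hsub : {p, q} ⊆ T := by intro r hr; rcases hr with hr | hr <;> subst hr <;> assumption
  have := hT.2 _ hsub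
  rwa [sSup_pair] at this

lemma CS_inf_mem {T : Set (K2 × Bool)} (hT : IsCompleteSublattice T)
    {p q : K2 × Bool} (hp : p ∈ T) (hq : q ∈ T) : p ⊓ q ∈ T := by
  have hsub : {p, q} ⊆ T := by intro r hr; rcases hr with hr | hr <;> subst hr <;> assumption
  have := hT.1 _ hsub
  rwa [sInf_pair] at this

lemma cc_ne_top {n m : ℕ} : cc n m ≠ (⊤ : K2) := WithTop.coe_ne_top

lemma cc_inj {n m n' m' : ℕ} (h : cc n m = cc n' m') : n = n' ∧ m = m' := by
  have h1 := cc_le_cc.1 h.le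
  have h2 := cc_le_cc.1 h.ge
  omega

lemma bot_L2 : (⊥ : K2 × Bool) = ((⊥ : K2), false) := rfl
lemma top_L2 : (⊤ : K2 × Bool) = ((⊤ : K2), true) := rfl

/-! ### generators -/

lemma gen_succ (n m : ℕ) (b : Bool) : ¬ IsLatNonGenerator ((cc n (m+1), b) : K2 × Bool) := by
  set a : K2 × Bool := (cc n (m+1), b) with ha
  set S : Set (K2 × Bool) := {p | p.1 ≠ cc n (m+1)} with hSdef
  have hS : IsCompleteSublattice S := by
    constructor
    · intro Y hY
      intro hmem
      have : sInf (Prod.fst '' Y) = cc n (m+1) := by rw [← Prod.fst_sInf]; exact hmem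
      obtain ⟨y, hyY, hy1⟩ := sInf_eq_cc_mem this
      exact hY hyY hy1
    · intro Y hY
      intro hmem
      have : sSup (Prod.fst '' Y) = cc n (m+1) := by rw [← Prod.fst_sSup]; exact hmem
      obtain ⟨y, hyY, hy1⟩ := sSup_eq_cc_succ_mem this
      exact hY hyY hy1
  have haS : a ∉ S := by simp [hSdef, ha]
  apply not_nonGen hS haS
  apply Set.eq_univ_of_forall
  intro p
  intro T hT
  obtain ⟨hTc, hTsub⟩ := hT
  have haT : a ∈ T := hTsub (Or.inr rfl)
  have hST : S ⊆ T := (Set.subset_union_left).trans hTsub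
  by_cases hp1 : p.1 = cc n (m+1)
  · -- p is one of the two special elements
    rcases Bool.eq_false_or_eq_true p.2 with h2 | h2
    · -- p = (cc n (m+1), true)
      rcases Bool.eq_false_or_eq_true b with hb | hb
      · subst hb
        have : p = a := Prod.ext hp1 h2
        exact this ▸ haT
      · -- b = false, p.2 = true : p = a ⊔ (cc 0 0, true)
        subst hb
        have hmem : ((cc 0 0, true) : K2 × Bool) ∈ S := by
          simp only [hSdef, Set.mem_setOf_eq]
          intro hc
          obtain ⟨_, h⟩ := cc_inj hc
          omega
        have hle : cc 0 0 ≤ cc n (m+1) := cc_le_cc.2 (by omega)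
        have : a ⊔ (cc 0 0, true) = p := by
          apply Prod.ext
          · show cc n (m+1) ⊔ cc 0 0 = p.1
            rw [sup_eq_left.2 hle, hp1]
          · show false ⊔ true = p.2
            rw [h2]; rfl
        exact this ▸ CS_sup_mem hTc haT (hST hmem)
    · -- p = (cc n (m+1), false)
      rcases Bool.eq_false_or_eq_true b with hb | hb
      · -- b = true, p.2 = false : p = a ⊓ (⊤, false)
        subst hb
        have hmem : (((⊤ : K2), false) : K2 × Bool) ∈ S := by
          simp only [hSdef, Set.mem_setOf_eq]
          exact fun hc => cc_ne_top hc.symm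
        have : a ⊓ ((⊤ : K2), false) = p := by
          apply Prod.ext
          · show cc n (m+1) ⊓ ⊤ = p.1
            rw [inf_top_eq, hp1]
          · show true ⊓ false = p.2
            rw [h2]; rfl
        exact this ▸ CS_inf_mem hTc haT (hST hmem)
      · subst hb
        have : p = a := Prod.ext hp1 h2
        exact this ▸ haT
  · exact hST hp1

lemma gen_top_false : ¬ IsLatNonGenerator (((⊤ : K2), false) : K2 × Bool) := by
  set a : K2 × Bool := ((⊤ : K2), false) with ha
  set S : Set (K2 × Bool) := {p | p.2 = true ∨ p = ((⊥ : K2), false)} with hSdef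
  have hS : IsCompleteSublattice S := by
    constructor
    · intro Y hY
      by_cases hex : ∃ y ∈ Y, y.2 = false
      · obtain ⟨y, hyY, hy2⟩ := hex
        have hybot : y = ((⊥ : K2), false) := by
          rcases hY hyY with h | h
          · rw [hy2] at h; exact absurd h (by decide)
          · exact h
        have : sInf Y ≤ (⊥ : K2 × Bool) := by
          rw [bot_L2, ← hybot]; exact sInf_le hyY
        have : sInf Y = ((⊥ : K2), false) := by
          rw [← bot_L2]; exact le_bot_iff.1 this
        exact Or.inr this
      · push_neg at hex
        left
        have h2 : (sInf Y).2 = sInf (Prod.snd '' Y) := Prod.snd_sInf Y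
        rw [h2]
        have : true ≤ sInf (Prod.snd '' Y) := by
          apply le_sInf
          rintro _ ⟨y, hy, rfl⟩
          have := hex y hy
          rcases Bool.eq_false_or_eq_true y.2 with h | h
          · rw [h]
          · exact absurd h this
        exact top_le_iff.1 this
    · intro Y hY
      by_cases hex : ∃ y ∈ Y, y.2 = true
      · obtain ⟨y, hyY, hy2⟩ := hex
        left
        have h2 : (sSup Y).2 = sSup (Prod.snd '' Y) := Prod.snd_sSup Y
        rw [h2]
        have : true ≤ sSup (Prod.snd '' Y) := hy2 ▸ le_sSup ⟨y, hyY, rfl⟩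
        exact top_le_iff.1 this
      · push_neg at hex
        right
        have hsub : Y ⊆ {((⊥ : K2), false)} := by
          intro y hy
          rcases hY hy with h | h
          · exact absurd h (hex y hy)
          · exact h
        have : sSup Y ≤ (⊥ : K2 × Bool) := by
          rw [bot_L2]
          exact sSup_le (fun y hy => (hsub hy) ▸ le_refl _)
        rw [← bot_L2]
        exact le_bot_iff.1 this
  have haS : a ∉ S := by
    simp only [hSdef, ha, Set.mem_setOf_eq]
    push_neg
    constructor
    · decide
    · intro hc
      have := congrArg Prod.fst hc
      simp only at this
      rw [K2_bot] at this
      exact cc_ne_top this.symm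
  apply not_nonGen hS haS
  apply Set.eq_univ_of_forall
  intro p T hT
  obtain ⟨hTc, hTsub⟩ := hT
  have haT : a ∈ T := hTsub (Or.inr rfl)
  have hST : S ⊆ T := (Set.subset_union_left).trans hTsub
  rcases Bool.eq_false_or_eq_true p.2 with h2 | h2
  · exact hST (Or.inl h2)
  · -- p.2 = false : p = (p.1, true) ⊓ a
    have hmem : ((p.1, true) : K2 × Bool) ∈ S := Or.inl rfl
    have : ((p.1, true) : K2 × Bool) ⊓ a = p := by
      apply Prod.ext
      · show p.1 ⊓ ⊤ = p.1
        exact inf_top_eq p.1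
      · show true ⊓ false = p.2
        rw [h2]; rfl
    exact this ▸ CS_inf_mem hTc (hST hmem) haT

lemma gen_bot_true : ¬ IsLatNonGenerator ((cc 0 0, true) : K2 × Bool) := by
  set a : K2 × Bool := (cc 0 0, true) with ha
  set S : Set (K2 × Bool) := {p | p.2 = false ∨ p = ((⊤ : K2), true)} with hSdef
  have hS : IsCompleteSublattice S := by
    constructor
    · intro Y hY
      by_cases hex : ∃ y ∈ Y, y.2 = false
      · obtain ⟨y, hyY, hy2⟩ := hex
        left
        have h2 : (sInf Y).2 = sInf (Prod.snd '' Y) := Prod.snd_sInf Y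
        rw [h2]
        have : sInf (Prod.snd '' Y) ≤ false := hy2 ▸ sInf_le ⟨y, hyY, rfl⟩
        exact le_bot_iff.1 this
      · push_neg at hex
        right
        have hsub : Y ⊆ {((⊤ : K2), true)} := by
          intro y hy
          rcases hY hy with h | h
          · exact absurd h (hex y hy)
          · exact h
        have : (⊤ : K2 × Bool) ≤ sInf Y := by
          rw [top_L2]
          exact le_sInf (fun y hy => (hsub hy) ▸ le_refl _)
        rw [← top_L2]
        exact top_le_iff.1 this
    · intro Y hY
      by_cases hex : ∃ y ∈ Y, y.2 = true
      · obtain ⟨y, hyY, hy2⟩ := hex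
        have hytop : y = ((⊤ : K2), true) := by
          rcases hY hyY with h | h
          · rw [hy2] at h; exact absurd h (by decide)
          · exact h
        have : (⊤ : K2 × Bool) ≤ sSup Y := by
          rw [top_L2, ← hytop]; exact le_sSup hyY
        right
        rw [← top_L2]
        exact top_le_iff.1 this
      · push_neg at hex
        left
        have h2 : (sSup Y).2 = sSup (Prod.snd '' Y) := Prod.snd_sSup Y
        rw [h2]
        have : sSup (Prod.snd '' Y) ≤ false := by
          apply sSup_le
          rintro _ ⟨y, hy, rfl⟩
          have := hex y hy
          rcases Bool.eq_false_or_eq_true y.2 with h | h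
          · exact absurd h this
          · rw [h]
        exact le_bot_iff.1 this
  have haS : a ∉ S := by
    simp only [hSdef, ha, Set.mem_setOf_eq]
    push_neg
    constructor
    · decide
    · intro hc
      have := congrArg Prod.fst hc
      simp only at this
      exact cc_ne_top this
  apply not_nonGen hS haS
  apply Set.eq_univ_of_forall
  intro p T hT
  obtain ⟨hTc, hTsub⟩ := hT
  have haT : a ∈ T := hTsub (Or.inr rfl)
  have hST : S ⊆ T := (Set.subset_union_left).trans hTsub
  rcases Bool.eq_false_or_eq_true p.2 with h2 | h2
  · -- p.2 = true : p = (p.1, false) ⊔ a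
    have hmem : ((p.1, false) : K2 × Bool) ∈ S := Or.inl rfl
    have : ((p.1, false) : K2 × Bool) ⊔ a = p := by
      apply Prod.ext
      · show p.1 ⊔ cc 0 0 = p.1
        exact sup_eq_left.2 (cc_bot_le p.1)
      · show false ⊔ true = p.2
        rw [h2]; rfl
    exact this ▸ CS_sup_mem hTc (hST hmem) haT
  · exact hST (Or.inl h2)

/-! ### non-generators -/

lemma nongen_bot' : IsLatNonGenerator (⊥ : K2 × Bool) := by
  intro X hXa
  have hbot : (⊥ : K2 × Bool) ∈ latGen X := by
    have := (isCS_latGen X).2 ∅ (Set.empty_subset _)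
    rwa [sSup_empty] at this
  have h1 : X ∪ {⊥} ⊆ latGen X :=
    Set.union_subset (subset_latGen X) (Set.singleton_subset_iff.2 hbot)
  have h2 := latGen_subset (isCS_latGen X) h1
  rw [hXa] at h2
  exact Set.eq_univ_of_univ_subset h2

lemma nongen_top' : IsLatNonGenerator (⊤ : K2 × Bool) := by
  intro X hXa
  have htop : (⊤ : K2 × Bool) ∈ latGen X := by
    have := (isCS_latGen X).1 ∅ (Set.empty_subset _)
    rwa [sInf_empty] at this
  have h1 : X ∪ {⊤} ⊆ latGen X :=
    Set.union_subset (subset_latGen X) (Set.singleton_subset_iff.2 htop)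
  have h2 := latGen_subset (isCS_latGen X) h1
  rw [hXa] at h2
  exact Set.eq_univ_of_univ_subset h2

lemma nongen_limit_false (n : ℕ) (hn : 1 ≤ n) :
    IsLatNonGenerator ((cc n 0, false) : K2 × Bool) := by
  set a : K2 × Bool := (cc n 0, false) with hadef
  intro X hXa
  by_cases haS : a ∈ latGen X
  · have h1 : X ∪ {a} ⊆ latGen X :=
      Set.union_subset (subset_latGen X) (Set.singleton_subset_iff.2 haS)
    have h2 := latGen_subset (isCS_latGen X) h1
    rw [hXa] at h2
    exact Set.eq_univ_of_univ_subset h2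
  · exfalso
    set S := latGen X with hSdef
    have hS : IsCompleteSublattice S := isCS_latGen X
    set A := colA S with hAdef
    set B := colB S with hBdef
    have hA : NEClosed A := colA_NEClosed hS
    have hB : NEClosed B := colB_NEClosed hS
    set lam := cc n 0 with hlamdef
    have hlamA : lam ∉ A := haS
    set beta0 := sInf B with hbeta0
    set A' := A ∪ ((B ∩ Set.Iic lam) ∪ {lam}) with hA'def
    set B' := B ∪ ((A ∪ {lam}) ∩ Set.Ici beta0) with hB'def
    have hA' : NEClosed A' := hA.union ((hB.inter_Iic lam).union (NEClosed.singleton lam))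
    have hB' : NEClosed B' := hB.union ((hA.union (NEClosed.singleton lam)).inter_Ici beta0)
    have hbot' : (⊥ : K2) ∈ A' := Or.inl (colA_bot hS)
    have htop' : (⊤ : K2) ∈ B' := Or.inl (colB_top hS)
    have hbeta0le : ∀ b ∈ B', beta0 ≤ b := by
      rintro b (hb | ⟨_, hb⟩)
      · exact sInf_le hb
      · exact hb
    have hsup' : ∀ al ∈ A', ∀ b ∈ B', al ⊔ b ∈ B' := by
      intro al hal b hb
      rcases le_total al b with h | h
      · rw [sup_eq_right.2 h]; exact hb
      · rw [sup_eq_left.2 h]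
        have hb0 : beta0 ≤ al := le_trans (hbeta0le b hb) h
        rcases hal with hal | (hal | hal)
        · exact Or.inr ⟨Or.inl hal, hb0⟩
        · exact Or.inl hal.1
        · exact Or.inr ⟨Or.inr hal, hb0⟩
    have hinf' : ∀ al ∈ A', ∀ b ∈ B', al ⊓ b ∈ A' := by
      intro al hal b hb
      rcases le_total al b with h | h
      · rw [inf_eq_left.2 h]; exact hal
      · rw [inf_eq_right.2 h]
        rcases hb with hbB | ⟨hbA, _⟩
        · rcases hal with hal | (hal | hal)
          · -- al ∈ A : b = al ⊓ b ∈ A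
            have := col_mix_inf hS hal hbB
            rw [inf_eq_right.2 h] at this
            exact Or.inl this
          · exact Or.inr (Or.inl ⟨hbB, le_trans h hal.2⟩)
          · exact Or.inr (Or.inl ⟨hbB, h.trans (le_of_eq hal)⟩)
        · rcases hbA with hbA | hbA
          · exact Or.inl hbA
          · exact Or.inr (Or.inr hbA)
    have hT : IsCompleteSublattice (mkLat A' B') :=
      mkLat_isCS hA' hB' hbot' htop' hsup' hinf'
    have hsubT : X ∪ {a} ⊆ mkLat A' B' := by
      apply Set.union_subset
      · exact (subset_latGen X).trans
          (sub_mkLat_of_cols (fun k hk => Or.inl hk) (fun k hk => Or.inl hk))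
      · intro p hp
        rw [Set.mem_singleton_iff] at hp
        subst hp
        exact mem_mkLat_false.2 (Or.inr (Or.inr rfl))
    have huniv : Set.univ ⊆ mkLat A' B' := by
      rw [← hXa]; exact latGen_subset hT hsubT
    -- derive contradiction
    have hbotlt : (⊥ : K2) < lam := by
      rw [K2_bot, hlamdef]
      exact cc_lt_cc.2 (Or.inl hn)
    have hne : (A ∩ Set.Iio lam).Nonempty := ⟨⊥, colA_bot hS, hbotlt⟩
    set mu := sSup (A ∩ Set.Iio lam) with hmudef
    have hmuA : mu ∈ A := hA.1 _ Set.inter_subset_left hne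
    have hmule : mu ≤ lam := sSup_le (fun z hz => le_of_lt hz.2)
    have hmult : mu < lam := lt_of_le_of_ne hmule (fun h => hlamA (h ▸ hmuA))
    rcases hq : mu with _ | q
    · rw [hq] at hmult; exact not_top_lt hmult
    rw [hq] at hmult
    have hq1 : (ofLex q).1 < n := by
      have := coe_lt_cc.1 hmult
      omega
    set bs : K2 := ((toLex ((ofLex q).1, (ofLex q).2 + 1) : ℕ ×ₗ ℕ) : K2) with hbsdef
    have hmubs : mu < bs := by
      rw [hq]
      exact WithTop.coe_lt_coe.2
        ((Prod.Lex.lt_iff (x := q) (y := toLex ((ofLex q).1, (ofLex q).2 + 1))).2 (Or.inr ⟨rfl, by simp only [ofLex_toLex]; omega⟩))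
    have hbslam : bs < lam := coe_lt_cc.2 (Or.inl hq1)
    have hbsA' : bs ∈ A' := mem_mkLat_false.1 (huniv (Set.mem_univ (bs, false)))
    have hbsnA : bs ∉ A := by
      intro h
      have hle : bs ≤ mu := by
        rw [hmudef]
        exact le_sSup ⟨h, hbslam⟩
      exact absurd hle (not_le_of_gt hmubs)
    have hbsB : bs ∈ B := by
      rcases hbsA' with h | (h | h)
      · exact absurd h hbsnA
      · exact h.1
      · exact absurd h (ne_of_lt hbslam)
    have hlamc1 : lam < cc n 1 := cc_lt_cc.2 (Or.inr ⟨rfl, one_pos⟩)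
    have hc1A' : cc n 1 ∈ A' := mem_mkLat_false.1 (huniv (Set.mem_univ (cc n 1, false)))
    have hc1A : cc n 1 ∈ A := by
      rcases hc1A' with h | (h | h)
      · exact h
      · exact absurd h.2 (not_le_of_gt hlamc1)
      · exact absurd h (by rw [hlamdef]; intro hc; obtain ⟨_, h2⟩ := cc_inj hc; omega)
    have hfinal := col_mix_inf hS hc1A hbsB
    rw [inf_eq_right.2 (le_of_lt (hbslam.trans hlamc1))] at hfinal
    exact hbsnA hfinal

lemma nongen_limit_true (n : ℕ) (hn : 1 ≤ n) :
    IsLatNonGenerator ((cc n 0, true) : K2 × Bool) := by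
  set a : K2 × Bool := (cc n 0, true) with hadef
  intro X hXa
  by_cases haS : a ∈ latGen X
  · have h1 : X ∪ {a} ⊆ latGen X :=
      Set.union_subset (subset_latGen X) (Set.singleton_subset_iff.2 haS)
    have h2 := latGen_subset (isCS_latGen X) h1
    rw [hXa] at h2
    exact Set.eq_univ_of_univ_subset h2
  · exfalso
    set S := latGen X with hSdef
    have hS : IsCompleteSublattice S := isCS_latGen X
    set A := colA S with hAdef
    set B := colB S with hBdef
    have hA : NEClosed A := colA_NEClosed hS
    have hB : NEClosed B := colB_NEClosed hS
    set lam := cc n 0 with hlamdef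
    have hlamB : lam ∉ B := haS
    set alpha1 := sSup A with halpha1
    have halpha1A : alpha1 ∈ A := hA.1 A subset_rfl ⟨⊥, colA_bot hS⟩
    set B' := B ∪ ((A ∩ Set.Ici lam) ∪ {lam}) with hB'def
    set A' := A ∪ ((B ∪ {lam}) ∩ Set.Iic alpha1) with hA'def
    have hB' : NEClosed B' := hB.union ((hA.inter_Ici lam).union (NEClosed.singleton lam))
    have hA' : NEClosed A' := hA.union ((hB.union (NEClosed.singleton lam)).inter_Iic alpha1)
    have hbot' : (⊥ : K2) ∈ A' := Or.inl (colA_bot hS)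
    have htop' : (⊤ : K2) ∈ B' := Or.inl (colB_top hS)
    have halple : ∀ al ∈ A', al ≤ alpha1 := by
      rintro al (hal | ⟨_, hal⟩)
      · exact le_sSup hal
      · exact hal
    have hsup' : ∀ al ∈ A', ∀ b ∈ B', al ⊔ b ∈ B' := by
      intro al hal b hb
      rcases le_total al b with h | h
      · rw [sup_eq_right.2 h]; exact hb
      · rw [sup_eq_left.2 h]
        rcases hal with halA | ⟨halB, _⟩
        · rcases hb with hbB | (hbA | hbl)
          · have := col_mix_sup hS halA hbB
            rw [sup_eq_left.2 h] at this
            exact Or.inl this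
          · exact Or.inr (Or.inl ⟨halA, le_trans hbA.2 h⟩)
          · exact Or.inr (Or.inl ⟨halA, hbl ▸ h⟩)
        · rcases halB with halB | hall
          · exact Or.inl halB
          · exact Or.inr (Or.inr hall)
    have hinf' : ∀ al ∈ A', ∀ b ∈ B', al ⊓ b ∈ A' := by
      intro al hal b hb
      rcases le_total al b with h | h
      · rw [inf_eq_left.2 h]; exact hal
      · rw [inf_eq_right.2 h]
        have hba1 : b ≤ alpha1 := le_trans h (halple al hal)
        rcases hb with hbB | (hbA | hbl)
        · exact Or.inr ⟨Or.inl hbB, hba1⟩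
        · exact Or.inl hbA.1
        · exact Or.inr ⟨Or.inr hbl, hba1⟩
    have hT : IsCompleteSublattice (mkLat A' B') :=
      mkLat_isCS hA' hB' hbot' htop' hsup' hinf'
    have hsubT : X ∪ {a} ⊆ mkLat A' B' := by
      apply Set.union_subset
      · exact (subset_latGen X).trans
          (sub_mkLat_of_cols (fun k hk => Or.inl hk) (fun k hk => Or.inl hk))
      · intro p hp
        rw [Set.mem_singleton_iff] at hp
        subst hp
        exact mem_mkLat_true.2 (Or.inr (Or.inr rfl))
    have huniv : Set.univ ⊆ mkLat A' B' := by
      rw [← hXa]; exact latGen_subset hT hsubT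
    -- contradiction : Iio lam ⊆ B , so lam = sSup (Iio lam) ∈ B
    have hIio : Set.Iio lam ⊆ B := by
      intro k hk
      have hk' : k ∈ B' := mem_mkLat_true.1 (huniv (Set.mem_univ (k, true)))
      rcases hk' with h | (h | h)
      · exact h
      · exact absurd (Set.mem_Ici.1 h.2) (not_le_of_gt (Set.mem_Iio.1 hk))
      · exact absurd h (ne_of_lt (Set.mem_Iio.1 hk))
    have hbotlt : (⊥ : K2) < lam := by
      rw [K2_bot, hlamdef]
      exact cc_lt_cc.2 (Or.inl hn)
    have hlamB' : lam ∈ B := by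
      have := hB.1 _ hIio ⟨⊥, hbotlt⟩
      rwa [hlamdef, sSup_Iio_cc] at this
    exact hlamB hlamB'

/-- In `L₂ = (WithTop (ℕ ×ₗ ℕ)) × Bool`, the set of non-generators is exactly
`{((n,0), false) : n ∈ ℕ} ∪ {((n,0), true) : n ≥ 1} ∪ {(⊤, true)}`. -/
theorem nonGenerators_L2_description :
    {a : WithTop (ℕ ×ₗ ℕ) × Bool | IsLatNonGenerator a} =
      {p : WithTop (ℕ ×ₗ ℕ) × Bool |
          ∃ n : ℕ, p = (((toLex (n, 0) : ℕ ×ₗ ℕ) : WithTop (ℕ ×ₗ ℕ)), false)} ∪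
      {p : WithTop (ℕ ×ₗ ℕ) × Bool |
          ∃ n : ℕ, 1 ≤ n ∧ p = (((toLex (n, 0) : ℕ ×ₗ ℕ) : WithTop (ℕ ×ₗ ℕ)), true)} ∪
      {((⊤ : WithTop (ℕ ×ₗ ℕ)), true)} := by
  apply Set.eq_of_subset_of_subset
  · intro p hng
    simp only [Set.mem_setOf_eq] at hng
    simp only [Set.mem_union, Set.mem_setOf_eq, Set.mem_singleton_iff]
    by_contra hc
    push_neg at hc
    obtain ⟨⟨h1, h2⟩, h3⟩ := hc
    obtain ⟨k, b⟩ := p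
    rcases k with _ | q
    · rcases Bool.eq_false_or_eq_true b with hb | hb
      · subst hb
        exact h3 rfl
      · subst hb
        exact gen_top_false hng
    · obtain ⟨n, m⟩ := q
      rcases m with _ | m
      · rcases Bool.eq_false_or_eq_true b with hb | hb
        · subst hb
          rcases Nat.eq_zero_or_pos n with h0 | hpos
          · subst h0
            exact gen_bot_true hng
          · exact h2 n hpos rfl
        · subst hb
          exact h1 n rfl
      · exact gen_succ n m b hng
  · intro p hp
    simp only [Set.mem_union, Set.mem_setOf_eq, Set.mem_singleton_iff] at hp
    simp only [Set.mem_setOf_eq]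
    rcases hp with (⟨n, rfl⟩ | ⟨n, hn, rfl⟩) | rfl
    · rcases Nat.eq_zero_or_pos n with h0 | hpos
      · subst h0
        have := nongen_bot'
        rwa [bot_L2, K2_bot] at this
      · exact nongen_limit_false n hpos
    · exact nongen_limit_true n hn
    · have := nongen_top'
      rwa [top_L2] at this
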